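/- Let A and B be algebras over ℂ with A unital, and φ : M₂(A) → B an arbitrary function. Then φ is a ℂ-algebra homomorphism if and only if φ is a semigroup homomorphism (φ(xy) = φ(x)φ(y) for all x, y) which is ℝ-linear on ℝ·1 (i.e. φ(λ·1 + μ·1) = λφ(1) + μφ(1) for all λ, μ ∈ ℝ, so in particular φ(λ·1) = λφ(1) for λ ∈ ℝ) and satisfies φ(i·1) = i·φ(e₁₁) + i·φ(e₂₂). -/

import Mathlib

/-!
A multiplicative map `φ` on `Mₙ(A)`, `n ≥ 2`, with `φ 0 = 0` and `φ 1 = ∑ φ(eᵢᵢ)` is additive.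
Multiplying by `φ 1` on either side splits `φ x = ∑ᵢ φ(eᵢᵢ x) = ∑ₖ φ(x eₖₖ)`, so `φ` is the sum
of its values on the entries `eᵢₖ(xᵢₖ)`. Off the diagonal,
`(eᵢᵢ + eᵢⱼ s)(eᵢⱼ t + eⱼⱼ) = eᵢⱼ(s + t)` and the splitting give additivity in the entry, and
`eᵢᵢ(s) = eᵢⱼ(s) eⱼᵢ(1)` transfers it to the diagonal.

For `M₂(A)`, the element `e = φ e₁₁ + φ e₂₂` is idempotent, so squaring `φ(i·1) = i e` gives
`-φ 1 = φ(-1) = -e`. Once `φ` is additive, `φ(c·1) = c φ 1` follows from the real and the `i`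
case, and `φ(c x) = φ(c·1) φ x` gives `ℂ`-homogeneity.
-/

open Matrix

namespace Matrix

variable {n A B : Type*} [Fintype n] [DecidableEq n] [Semiring A]

theorem single_add_single_mul_single_add_single {i j : n} (hij : i ≠ j) (s t : A) :
    (single i i 1 + single i j s) * (single i j t + single j j 1) = single i j (s + t) := by
  simp only [add_mul, mul_add, single_mul_single_same, single_mul_single_of_ne _ _ _ _ hij,
    single_mul_single_of_ne _ _ _ _ hij.symm, one_mul, mul_one, add_zero, single_add, add_comm]

section MulHom

variable [NonUnitalNonAssocSemiring B] (φ : Matrix n n A →ₙ* B)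

theorem map_eq_sum_map_single_mul (hone : φ 1 = ∑ i, φ (single i i 1)) (x : Matrix n n A) :
    φ x = ∑ i, φ (single i i 1 * x) := by
  calc φ x = φ 1 * φ x := by rw [← map_mul, one_mul]
    _ = ∑ i, φ (single i i 1 * x) := by simp only [hone, Finset.sum_mul, map_mul]

theorem map_eq_sum_map_mul_single (hone : φ 1 = ∑ i, φ (single i i 1)) (x : Matrix n n A) :
    φ x = ∑ i, φ (x * single i i 1) := by
  calc φ x = φ x * φ 1 := by rw [← map_mul, mul_one]
    _ = ∑ i, φ (x * single i i 1) := by simp only [hone, Finset.mul_sum, map_mul]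

theorem map_eq_sum_sum_map_single (hone : φ 1 = ∑ i, φ (single i i 1)) (x : Matrix n n A) :
    φ x = ∑ i, ∑ k, φ (single i k (x i k)) := by
  conv_lhs => rw [map_eq_sum_map_single_mul φ hone]
  refine Finset.sum_congr rfl fun i _ => ?_
  rw [map_eq_sum_map_mul_single φ hone]
  simp only [single_mul_mul_single, one_mul, mul_one]

theorem map_add_of_forall_single_mul_eq_zero (hzero : φ 0 = 0)
    (hone : φ 1 = ∑ i, φ (single i i 1)) {x y : Matrix n n A}
    (hxy : ∀ k, single k k 1 * x = 0 ∨ single k k 1 * y = 0) : φ (x + y) = φ x + φ y := by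
  rw [map_eq_sum_map_single_mul φ hone (x + y), map_eq_sum_map_single_mul φ hone x,
    map_eq_sum_map_single_mul φ hone y, ← Finset.sum_add_distrib]
  refine Finset.sum_congr rfl fun k _ => ?_
  rcases hxy k with h | h <;> simp only [mul_add, h, hzero, zero_add, add_zero]

theorem map_add_of_forall_mul_single_eq_zero (hzero : φ 0 = 0)
    (hone : φ 1 = ∑ i, φ (single i i 1)) {x y : Matrix n n A}
    (hxy : ∀ k, x * single k k 1 = 0 ∨ y * single k k 1 = 0) : φ (x + y) = φ x + φ y := by
  rw [map_eq_sum_map_mul_single φ hone (x + y), map_eq_sum_map_mul_single φ hone x,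
    map_eq_sum_map_mul_single φ hone y, ← Finset.sum_add_distrib]
  refine Finset.sum_congr rfl fun k _ => ?_
  rcases hxy k with h | h <;> simp only [add_mul, h, hzero, zero_add, add_zero]

theorem map_single_add_of_ne (hzero : φ 0 = 0) (hone : φ 1 = ∑ i, φ (single i i 1))
    {i j : n} (hij : i ≠ j) (s t : A) :
    φ (single i j (s + t)) = φ (single i j s) + φ (single i j t) := by
  have hleft : φ (single i i 1 + single i j s) = φ (single i i 1) + φ (single i j s) := by
    refine map_add_of_forall_mul_single_eq_zero φ hzero hone fun k => ?_
    by_cases hk : j = k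
    · exact .inl (single_mul_single_of_ne (h := hk ▸ hij) ..)
    · exact .inr (single_mul_single_of_ne (h := hk) ..)
  have hright : φ (single i j t + single j j 1) = φ (single i j t) + φ (single j j 1) := by
    refine map_add_of_forall_single_mul_eq_zero φ hzero hone fun k => ?_
    by_cases hk : k = i
    · exact .inr (single_mul_single_of_ne (h := hk ▸ hij) ..)
    · exact .inl (single_mul_single_of_ne (h := hk) ..)
  rw [← single_add_single_mul_single_add_single hij, map_mul, hleft, hright]
  simp only [add_mul, mul_add, ← map_mul, single_mul_single_same, one_mul, mul_one,
    single_mul_single_of_ne _ _ _ _ hij, single_mul_single_of_ne _ _ _ _ hij.symm, hzero,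
    zero_add, add_comm]

theorem map_single_add [Nontrivial n] (hzero : φ 0 = 0) (hone : φ 1 = ∑ i, φ (single i i 1))
    (i j : n) (s t : A) :
    φ (single i j (s + t)) = φ (single i j s) + φ (single i j t) := by
  rcases ne_or_eq i j with hij | rfl
  · exact map_single_add_of_ne φ hzero hone hij s t
  obtain ⟨j, hij⟩ := exists_ne i
  have hfactor : ∀ a : A, single i i a = single i j a * single j i 1 := fun a => by
    rw [single_mul_single_same, mul_one]
  rw [hfactor, map_mul, map_single_add_of_ne φ hzero hone hij.symm, add_mul, ← map_mul, ← map_mul,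
    ← hfactor, ← hfactor]

theorem map_add_of_map_one_eq_sum [Nontrivial n] (hzero : φ 0 = 0)
    (hone : φ 1 = ∑ i, φ (single i i 1)) (x y : Matrix n n A) : φ (x + y) = φ x + φ y := by
  rw [map_eq_sum_sum_map_single φ hone (x + y), map_eq_sum_sum_map_single φ hone x,
    map_eq_sum_sum_map_single φ hone y]
  simp only [add_apply, map_single_add φ hzero hone, Finset.sum_add_distrib]

end MulHom

theorem isIdempotentElem_map_single_zero_add_map_single_one [NonUnitalNonAssocSemiring B]
    (φ : Matrix (Fin 2) (Fin 2) A →ₙ* B) (hzero : φ 0 = 0) :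
    IsIdempotentElem (φ (single 0 0 1) + φ (single 1 1 1)) := by
  have hidem : ∀ i, IsIdempotentElem (φ (single i i 1)) := fun i =>
    IsIdempotentElem.map (by simp [IsIdempotentElem]) φ
  refine (hidem 0).add (hidem 1) ?_
  rw [← map_mul, ← map_mul, single_mul_single_of_ne _ _ _ _ (by decide),
    single_mul_single_of_ne _ _ _ _ (by decide), hzero, add_zero]

end Matrix

theorem Complex.I_smul_mul_I_smul {M : Type*} [NonUnitalNonAssocRing M] [Module ℂ M]
    [SMulCommClass ℂ M M] [IsScalarTower ℂ M M] (m : M) :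
    (Complex.I • m) * (Complex.I • m) = -(m * m) := by
  rw [smul_mul_smul_comm, Complex.I_mul_I, neg_one_smul]

theorem MulHom.map_smul_of_map_smul_one {R M B : Type*} [MulOneClass M] [SMul R M]
    [IsScalarTower R M M] [Mul B] [SMul R B] [IsScalarTower R B B] (φ : M →ₙ* B) {c : R}
    (hc : φ (c • 1) = c • φ 1) (x : M) : φ (c • x) = c • φ x := by
  rw [← one_mul x, ← smul_mul_assoc, map_mul, hc, smul_mul_assoc, ← map_mul]

theorem MulHom.map_complex_smul_one {M B : Type*} [Semiring M] [Module ℂ M] [IsScalarTower ℂ M M]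
    [NonUnitalNonAssocSemiring B] [Module ℂ B] [IsScalarTower ℂ B B] (φ : M →ₙ* B)
    (hadd : ∀ x y, φ (x + y) = φ x + φ y) (hreal : ∀ r : ℝ, φ ((r : ℂ) • 1) = (r : ℂ) • φ 1)
    (hI : φ (Complex.I • 1) = Complex.I • φ 1) (c : ℂ) : φ (c • 1) = c • φ 1 := by
  calc φ (c • 1) = φ ((c.re : ℂ) • 1 + (c.im : ℂ) • Complex.I • 1) := by
        rw [smul_smul, ← add_smul, Complex.re_add_im]
    _ = c • φ 1 := by
        rw [hadd, hreal, φ.map_smul_of_map_smul_one (hreal c.im), hI, smul_smul, ← add_smul,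
          Complex.re_add_im]

theorem Matrix.map_one_eq_of_map_I_smul_one {A B : Type*} [Ring A] [Algebra ℂ A] [NonUnitalRing B]
    [Module ℂ B] [SMulCommClass ℂ B B] [IsScalarTower ℂ B B] (φ : Matrix (Fin 2) (Fin 2) A →ₙ* B)
    (hzero : φ 0 = 0) (hneg : φ (-1) = -φ 1)
    (hI : φ (Complex.I • 1) = Complex.I • φ (single 0 0 1) + Complex.I • φ (single 1 1 1)) :
    φ 1 = φ (single 0 0 1) + φ (single 1 1 1) := by
  rw [← smul_add] at hI
  have := congrArg φ (Complex.I_smul_mul_I_smul (1 : Matrix (Fin 2) (Fin 2) A))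
  rw [map_mul, hI, Complex.I_smul_mul_I_smul, one_mul, hneg,
    (isIdempotentElem_map_single_zero_add_map_single_one φ hzero).eq] at this
  exact neg_inj.mp this.symm

/-- Let `A` and `B` be algebras over `ℂ` with `A` unital,
and `φ : M₂(A) → B` an arbitrary function.  Then `φ` is a `ℂ`-algebra
homomorphism (additive, multiplicative and `ℂ`-homogeneous) if and only if
`φ` is a semigroup homomorphism which is `ℝ`-linear on `ℝ·1` and satisfies
`φ(i·1) = i·φ(e₁₁) + i·φ(e₂₂)`. -/
theorem stmt_3 {A B : Type*} [Ring A] [Algebra ℂ A]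
    [NonUnitalRing B] [Module ℂ B] [SMulCommClass ℂ B B] [IsScalarTower ℂ B B]
    (φ : Matrix (Fin 2) (Fin 2) A → B) :
    ((∀ x y, φ (x + y) = φ x + φ y) ∧ (∀ x y, φ (x * y) = φ x * φ y) ∧
        (∀ (c : ℂ) (x), φ (c • x) = c • φ x)) ↔
      ((∀ x y, φ (x * y) = φ x * φ y) ∧
        (∀ lam mu : ℝ,
          φ ((lam : ℂ) • (1 : Matrix (Fin 2) (Fin 2) A) +
              (mu : ℂ) • (1 : Matrix (Fin 2) (Fin 2) A)) =
            (lam : ℂ) • φ 1 + (mu : ℂ) • φ 1) ∧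
        φ (Complex.I • (1 : Matrix (Fin 2) (Fin 2) A)) =
          Complex.I • φ (Matrix.single 0 0 (1 : A)) +
          Complex.I • φ (Matrix.single 1 1 (1 : A))) := by
  constructor
  · rintro ⟨hadd, hmul, hsmul⟩
    refine ⟨hmul, fun lam mu => by rw [hadd, hsmul, hsmul], ?_⟩
    rw [hsmul, ← sum_single_one (m := Fin 2) (α := A), Fin.sum_univ_two, hadd, smul_add]
  · rintro ⟨hmul, hreal, hI⟩
    let ψ : Matrix (Fin 2) (Fin 2) A →ₙ* B := ⟨φ, hmul⟩
    have hzero : φ 0 = 0 := by simpa using hreal 0 0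
    have hreal' : ∀ r : ℝ, φ ((r : ℂ) • 1) = (r : ℂ) • φ 1 := fun r => by simpa using hreal r 0
    have hneg : φ (-1) = -φ 1 := by simpa using hreal' (-1)
    have hone : φ 1 = φ (single 0 0 1) + φ (single 1 1 1) :=
      map_one_eq_of_map_I_smul_one ψ hzero hneg hI
    have hadd : ∀ x y, φ (x + y) = φ x + φ y :=
      map_add_of_map_one_eq_sum ψ hzero (by rw [Fin.sum_univ_two]; exact hone)
    refine ⟨hadd, hmul, fun c x => ψ.map_smul_of_map_smul_one ?_ x⟩
    refine ψ.map_complex_smul_one hadd hreal' ?_ c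
    show φ (Complex.I • 1) = Complex.I • φ 1
    rw [hI, hone, smul_add]
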